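/- Let u ∈ ℝ^n satisfy ∑_{j=1}^n u_j = n and 3/4 ≤ u_j ≤ 5/4 for all j. Then 1.8·n·δ(u) ≤ Δ21(u) ≤ (9/2)·n·δ(u), and Δ22(u) ≤ 5·n·δ(u). -/

import Mathlib

/-!
Each inequality holds termwise in the form `g (u j) ≤ a * (u j * log (u j)) - b * (u j - 1)`
(or its reverse) for `u j ∈ [3/4, 5/4]`; summing over `j`, the linear terms cancel because
`∑ j, (u j - 1) = 0`. The termwise bounds come from the rational bounds
`2 (x - 1) / (x + 1) ≤ log x ≤ (x² - 1) / (2 x)` for `x ≥ 1`, reversed for `0 < x ≤ 1`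
(cleared of denominators, both sides agree at `x = 1` and differ by a monotone function);
multiplied by suitable nonnegative factors, they reduce each termwise bound to a polynomial
inequality on `[3/4, 5/4]`.
-/

/-- The entropy proximity measure `δ(u) = (1/n) ∑ u_j ln u_j`. -/
noncomputable def entropyDelta (n : ℕ) (u : Fin n → ℝ) : ℝ :=
  (1 / (n : ℝ)) * ∑ j, u j * Real.log (u j)

/-- `Δ21(u) = ∑ u_j² ln u_j`. -/
noncomputable def Delta21 (n : ℕ) (u : Fin n → ℝ) : ℝ :=
  ∑ j, (u j) ^ 2 * Real.log (u j)

/-- `Δ22(u) = ∑ u_j² ln² u_j`. -/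
noncomputable def Delta22 (n : ℕ) (u : Fin n → ℝ) : ℝ :=
  ∑ j, (u j) ^ 2 * Real.log (u j) ^ 2

open Real Set Finset

lemma monotoneOn_Ioi_of_hasDerivAt_nonneg {a : ℝ} {f f' : ℝ → ℝ}
    (hf : ∀ x ∈ Ioi a, HasDerivAt f (f' x) x) (hf' : ∀ x ∈ Ioi a, 0 ≤ f' x) :
    MonotoneOn f (Ioi a) :=
  monotoneOn_of_hasDerivWithinAt_nonneg (convex_Ioi a)
    (fun x hx => (hf x hx).continuousAt.continuousWithinAt)
    (by simpa only [interior_Ioi] using fun x hx => (hf x hx).hasDerivWithinAt)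
    (by simpa only [interior_Ioi] using hf')

lemma monotoneOn_add_one_mul_log_sub :
    MonotoneOn (fun x : ℝ => (x + 1) * log x - 2 * (x - 1)) (Ioi 0) := by
  refine monotoneOn_Ioi_of_hasDerivAt_nonneg (f' := fun x => log x - (1 - x⁻¹))
    (fun x (hx : 0 < x) => ?_) (fun x hx => sub_nonneg.2 (one_sub_inv_le_log_of_pos hx))
  refine ((((hasDerivAt_id' x).add_const 1).mul (hasDerivAt_log hx.ne')).sub
    (((hasDerivAt_id' x).sub_const 1).const_mul 2)).congr_deriv ?_
  field_simp [hx.ne']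
  ring

lemma monotoneOn_sq_sub_one_sub_mul_log :
    MonotoneOn (fun x : ℝ => x ^ 2 - 1 - 2 * (x * log x)) (Ioi 0) := by
  refine monotoneOn_Ioi_of_hasDerivAt_nonneg (f' := fun x => 2 * (x - 1 - log x))
    (fun x (hx : 0 < x) => ?_) (fun x hx => by linarith [log_le_sub_one_of_pos hx])
  refine (((hasDerivAt_pow 2 x).sub_const 1).sub
    (((hasDerivAt_id' x).mul (hasDerivAt_log hx.ne')).const_mul 2)).congr_deriv ?_
  field_simp [hx.ne']
  ring

lemma two_mul_sub_one_le_add_one_mul_log {x : ℝ} (hx : 1 ≤ x) :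
    2 * (x - 1) ≤ (x + 1) * log x := by
  simpa using
    monotoneOn_add_one_mul_log_sub (mem_Ioi.2 one_pos) (mem_Ioi.2 <| one_pos.trans_le hx) hx

lemma add_one_mul_log_le_two_mul_sub_one {x : ℝ} (hx₀ : 0 < x) (hx : x ≤ 1) :
    (x + 1) * log x ≤ 2 * (x - 1) := by
  simpa using monotoneOn_add_one_mul_log_sub hx₀ (mem_Ioi.2 one_pos) hx

lemma two_mul_mul_log_le_sq_sub_one {x : ℝ} (hx : 1 ≤ x) :
    2 * (x * log x) ≤ x ^ 2 - 1 := by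
  simpa using
    monotoneOn_sq_sub_one_sub_mul_log (mem_Ioi.2 one_pos) (mem_Ioi.2 <| one_pos.trans_le hx) hx

lemma sq_sub_one_le_two_mul_mul_log {x : ℝ} (hx₀ : 0 < x) (hx : x ≤ 1) :
    x ^ 2 - 1 ≤ 2 * (x * log x) := by
  simpa using monotoneOn_sq_sub_one_sub_mul_log hx₀ (mem_Ioi.2 one_pos) hx

section PointwiseBounds

variable {x : ℝ} (hx : x ∈ Icc (3 / 4 : ℝ) (5 / 4))
include hx

lemma le_sq_mul_log_of_mem_Icc :
    1.8 * (x * log x) - 0.8 * (x - 1) ≤ x ^ 2 * log x := by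
  obtain ⟨h3, h5⟩ := hx
  have hx₀ : 0 < x := by linarith
  rcases le_total 1 x with hx1 | hx1
  · nlinarith [mul_nonneg (show (0:ℝ) ≤ 1.8 * x - x ^ 2 by nlinarith)
        (sub_nonneg.2 (two_mul_mul_log_le_sq_sub_one hx1)),
      mul_nonneg (mul_nonneg hx₀.le (show (0:ℝ) ≤ x + 0.2 by linarith)) (sq_nonneg (x - 1))]
  · nlinarith [mul_nonneg (show (0:ℝ) ≤ 1.8 * x - x ^ 2 by nlinarith)
        (sub_nonneg.2 (add_one_mul_log_le_two_mul_sub_one hx₀ hx1)),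
      mul_nonneg (show (0:ℝ) ≤ x - 0.4 by linarith) (sq_nonneg (x - 1))]

lemma sq_mul_log_le_of_mem_Icc :
    x ^ 2 * log x ≤ 9 / 2 * (x * log x) - 7 / 2 * (x - 1) := by
  obtain ⟨h3, h5⟩ := hx
  have hx₀ : 0 < x := by linarith
  rcases le_total 1 x with hx1 | hx1
  · nlinarith [mul_nonneg (show (0:ℝ) ≤ 9 / 2 * x - x ^ 2 by nlinarith)
        (sub_nonneg.2 (two_mul_sub_one_le_add_one_mul_log hx1)),
      mul_nonneg (show (0:ℝ) ≤ 7 / 2 - 2 * x by linarith) (sq_nonneg (x - 1))]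
  · nlinarith [mul_nonneg (show (0:ℝ) ≤ 9 / 2 - x by linarith)
        (sub_nonneg.2 (sq_sub_one_le_two_mul_mul_log hx₀ hx1)),
      mul_nonneg (show (0:ℝ) ≤ 5 / 2 - x by linarith) (sq_nonneg (x - 1))]

lemma sq_mul_sq_log_le_of_mem_Icc :
    x ^ 2 * log x ^ 2 ≤ 5 * (x * log x) - 5 * (x - 1) := by
  obtain ⟨h3, h5⟩ := hx
  have hx₀ : 0 < x := by linarith
  rcases le_total 1 x with hx1 | hx1
  · have hlog := two_mul_mul_log_le_sq_sub_one hx1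
    have hxL : 0 ≤ x * log x := mul_nonneg hx₀.le (log_nonneg hx1)
    nlinarith [mul_nonneg (sub_nonneg.2 hlog) (show 0 ≤ x ^ 2 - 1 + 2 * (x * log x) by nlinarith),
      mul_nonneg (show (0:ℝ) ≤ 20 - (x + 1) ^ 3 by nlinarith) (sq_nonneg (x - 1)),
      mul_nonneg hx₀.le (sub_nonneg.2 (two_mul_sub_one_le_add_one_mul_log hx1))]
  · have hlog := sq_sub_one_le_two_mul_mul_log hx₀ hx1
    have hxL : x * log x ≤ 0 := mul_nonpos_of_nonneg_of_nonpos hx₀.le (log_nonpos hx₀.le hx1)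
    nlinarith [mul_nonneg (sub_nonneg.2 hlog) (show 0 ≤ 1 - x ^ 2 - 2 * (x * log x) by nlinarith),
      mul_nonneg (show (0:ℝ) ≤ 10 - (x + 1) ^ 2 by nlinarith) (sq_nonneg (x - 1))]

end PointwiseBounds

lemma natCast_mul_entropyDelta (n : ℕ) (u : Fin n → ℝ) :
    n * entropyDelta n u = ∑ j, u j * log (u j) := by
  rcases Nat.eq_zero_or_pos n with rfl | _
  · simp
  · rw [entropyDelta]
    field_simp

section SumBounds

variable {n : ℕ} {u : Fin n → ℝ} (hsum : ∑ j, u j = n) (a b : ℝ)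
include hsum

lemma sum_mul_log_sub_eq_mul_entropyDelta :
    ∑ j, (a * (u j * log (u j)) - b * (u j - 1)) = a * n * entropyDelta n u := by
  have hcentred : ∑ j, (u j - 1) = 0 := by simp [sum_sub_distrib, hsum]
  rw [sum_sub_distrib, ← mul_sum, ← mul_sum, hcentred, mul_assoc, natCast_mul_entropyDelta]
  ring

variable {a b} {g : Fin n → ℝ}

lemma sum_le_mul_entropyDelta (hg : ∀ j, g j ≤ a * (u j * log (u j)) - b * (u j - 1)) :
    ∑ j, g j ≤ a * n * entropyDelta n u :=
  sum_mul_log_sub_eq_mul_entropyDelta hsum a b ▸ sum_le_sum fun j _ => hg j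

lemma mul_entropyDelta_le_sum (hg : ∀ j, a * (u j * log (u j)) - b * (u j - 1) ≤ g j) :
    a * n * entropyDelta n u ≤ ∑ j, g j :=
  sum_mul_log_sub_eq_mul_entropyDelta hsum a b ▸ sum_le_sum fun j _ => hg j

end SumBounds

theorem stmt_7_general (n : ℕ) (u : Fin n → ℝ) (hsum : ∑ j, u j = (n : ℝ))
    (hlb : ∀ j, 3 / 4 ≤ u j) (hub : ∀ j, u j ≤ 5 / 4) :
    (1.8 * n * entropyDelta n u ≤ Delta21 n u ∧
      Delta21 n u ≤ (9 / 2) * n * entropyDelta n u) ∧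
    Delta22 n u ≤ 5 * n * entropyDelta n u := by
  have hu : ∀ j, u j ∈ Icc (3 / 4 : ℝ) (5 / 4) := fun j => ⟨hlb j, hub j⟩
  exact ⟨⟨mul_entropyDelta_le_sum hsum fun j => le_sq_mul_log_of_mem_Icc (hu j),
    sum_le_mul_entropyDelta hsum fun j => sq_mul_log_le_of_mem_Icc (hu j)⟩,
    sum_le_mul_entropyDelta hsum fun j => sq_mul_sq_log_le_of_mem_Icc (hu j)⟩

theorem stmt_7 (n : ℕ) (hn : 1 ≤ n) (u : Fin n → ℝ) (hsum : ∑ j, u j = (n : ℝ))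
    (hlb : ∀ j, 3 / 4 ≤ u j) (hub : ∀ j, u j ≤ 5 / 4) :
    (1.8 * n * entropyDelta n u ≤ Delta21 n u ∧
      Delta21 n u ≤ (9 / 2) * n * entropyDelta n u) ∧
    Delta22 n u ≤ 5 * n * entropyDelta n u :=
  stmt_7_general n u hsum hlb hub
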